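/- Let α ∈ (0,1), let F be a cumulative distribution function satisfying the quantile growth condition at level α with constants b_α > 0 and M_α > 0, and let G be a cumulative distribution function with sup_y |F(y) − G(y)| < M_α. Then |VaR_α(F) − VaR_α(G)| ≤ b_α · sup_y |F(y) − G(y)|. -/

import Mathlib

/-- A cumulative distribution function: nondecreasing, right-continuous,
tending to `0` at `−∞` and to `1` at `+∞`. -/
def IsCDF (F : ℝ → ℝ) : Prop :=
  Monotone F ∧ (∀ y : ℝ, ContinuousWithinAt F (Set.Ici y) y) ∧
    Filter.Tendsto F Filter.atBot (nhds 0) ∧ Filter.Tendsto F Filter.atTop (nhds 1)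

/-- Value-at-risk at level `α`: `VaR_α(F) = inf{ y : F y ≥ α }`. -/
noncomputable def VaR (α : ℝ) (F : ℝ → ℝ) : ℝ :=
  sInf {y : ℝ | α ≤ F y}

/-- `F` satisfies the quantile growth condition at level `α` with constants
`b, M`: `|F(VaR_α(F) + b·y) − α| ≥ |y|` for all `y ∈ [−M, M]`. -/
def QuantileGrowth (α : ℝ) (F : ℝ → ℝ) (b M : ℝ) : Prop :=
  ∀ y ∈ Set.Icc (-M) M, |y| ≤ |F (VaR α F + b * y) - α|

/-!
Let `ε` be the uniform distance between `F` and `G`. The growth condition at `t = ε` gives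
`F (VaR_α F + bε) ≥ α + ε`, hence `G ≥ α` there and `VaR_α G ≤ VaR_α F + bε`. Below
`VaR_α F - bε` the growth condition, applied at some `t ∈ (ε, M]`, forces `F < α - ε`, hence
`G < α`, so `VaR_α G ≥ VaR_α F - bε`.
-/

open Set Filter

namespace IsCDF

variable {F G : ℝ → ℝ} {α : ℝ}

lemma nonneg (hF : IsCDF F) (y : ℝ) : 0 ≤ F y :=
  le_of_tendsto hF.2.2.1 <| by
    filter_upwards [eventually_le_atBot y] with t ht using hF.1 ht

lemma le_one (hF : IsCDF F) (y : ℝ) : F y ≤ 1 :=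
  ge_of_tendsto hF.2.2.2 <| by
    filter_upwards [eventually_ge_atTop y] with t ht using hF.1 ht

lemma bddAbove_range_abs_sub (hF : IsCDF F) (hG : IsCDF G) :
    BddAbove (range fun y => |F y - G y|) := by
  refine ⟨1, ?_⟩
  rintro _ ⟨y, rfl⟩
  have := hF.nonneg y; have := hF.le_one y; have := hG.nonneg y; have := hG.le_one y
  exact abs_le.mpr ⟨by linarith, by linarith⟩

lemma nonempty_setOf_le (hF : IsCDF F) (hα : α < 1) : {y | α ≤ F y}.Nonempty :=
  ((hF.2.2.2.eventually (eventually_gt_nhds hα)).exists).imp fun _ h => h.le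

lemma bddBelow_setOf_le (hF : IsCDF F) (hα : 0 < α) : BddBelow {y | α ≤ F y} := by
  obtain ⟨m, hm⟩ := eventually_atBot.mp (hF.2.2.1.eventually (eventually_lt_nhds hα))
  exact ⟨m, fun z hz => le_of_not_ge fun hzm => (hm z hzm).not_ge hz⟩

lemma VaR_le (hF : IsCDF F) (hα : 0 < α) {y : ℝ} (hy : α ≤ F y) : VaR α F ≤ y :=
  csInf_le (hF.bddBelow_setOf_le hα) hy

lemma le_VaR (hF : IsCDF F) (hα : α < 1) {x : ℝ} (h : ∀ z < x, F z < α) : x ≤ VaR α F :=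
  le_csInf (hF.nonempty_setOf_le hα) fun z hz => le_of_not_gt fun hzx => (h z hzx).not_ge hz

/-- Right-continuity is what puts the infimum into the set. -/
lemma le_apply_VaR (hF : IsCDF F) (hα : α < 1) : α ≤ F (VaR α F) := by
  have hright : ∀ y ∈ Ioi (VaR α F), α ≤ F y := fun y hy => by
    obtain ⟨z, hz, hzy⟩ := exists_lt_of_csInf_lt (hF.nonempty_setOf_le hα) hy
    exact hz.trans (hF.1 hzy.le)
  exact ge_of_tendsto ((hF.2.1 _).mono Ioi_subset_Ici_self) (eventually_nhdsWithin_of_forall hright)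

end IsCDF

namespace QuantileGrowth

variable {F : ℝ → ℝ} {α b M : ℝ}

lemma add_le_apply_VaR_add (hg : QuantileGrowth α F b M) (hF : IsCDF F) (hα : α < 1)
    (hb : 0 ≤ b) {t : ℝ} (ht₀ : 0 ≤ t) (htM : t ≤ M) : α + t ≤ F (VaR α F + b * t) := by
  have hmono : α ≤ F (VaR α F + b * t) :=
    (hF.le_apply_VaR hα).trans (hF.1 (le_add_of_nonneg_right (by positivity)))
  have := hg t ⟨by linarith, htM⟩
  rw [abs_of_nonneg ht₀, abs_of_nonneg (sub_nonneg.mpr hmono)] at this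
  linarith

lemma apply_VaR_sub_le_sub (hg : QuantileGrowth α F b M) (hF : IsCDF F) (hα : 0 < α)
    (hb : 0 < b) {t : ℝ} (ht₀ : 0 < t) (htM : t ≤ M) : F (VaR α F - b * t) ≤ α - t := by
  have hbelow : F (VaR α F - b * t) < α := lt_of_not_ge fun h =>
    (hF.VaR_le hα h).not_gt (sub_lt_self _ (by positivity))
  have := hg (-t) ⟨by linarith, by linarith⟩
  rw [mul_neg, ← sub_eq_add_neg, abs_of_neg (neg_neg_of_pos ht₀),
    abs_of_neg (sub_neg.mpr hbelow)] at this
  linarith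

lemma apply_lt_sub_of_lt_VaR_sub (hg : QuantileGrowth α F b M) (hF : IsCDF F) (hα : 0 < α)
    (hb : 0 < b) {ε z : ℝ} (hε₀ : 0 ≤ ε) (hεM : ε < M) (hz : z < VaR α F - b * ε) :
    F z < α - ε := by
  set t := min M ((VaR α F - z) / b)
  have hεt : ε < t := lt_min hεM (by rw [lt_div_iff₀ hb]; linarith)
  have hzt : z ≤ VaR α F - b * t := by
    have := mul_le_mul_of_nonneg_left (min_le_right M ((VaR α F - z) / b)) hb.le
    rw [mul_div_cancel₀ _ hb.ne'] at this
    linarith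
  linarith [hF.1 hzt, hg.apply_VaR_sub_le_sub hF hα hb (hε₀.trans_lt hεt) (min_le_left _ _)]

end QuantileGrowth

theorem VaR_second_bound_general (α : ℝ) (hα : α ∈ Set.Ioo (0 : ℝ) 1)
    (F : ℝ → ℝ) (hF : IsCDF F)
    (bα Mα : ℝ) (hbα : 0 < bα)
    (hgrowth : QuantileGrowth α F bα Mα)
    (G : ℝ → ℝ) (hG : IsCDF G)
    (hclose : (⨆ y : ℝ, |F y - G y|) < Mα) :
    |VaR α F - VaR α G| ≤ bα * ⨆ y : ℝ, |F y - G y| := by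
  obtain ⟨hα₀, hα₁⟩ := hα
  set ε := ⨆ y : ℝ, |F y - G y|
  have hdist : ∀ y, |F y - G y| ≤ ε := le_ciSup (hF.bddAbove_range_abs_sub hG)
  have hε₀ : 0 ≤ ε := (abs_nonneg _).trans (hdist 0)
  have hupper : VaR α G ≤ VaR α F + bα * ε := hG.VaR_le hα₀ <| by
    linarith [hgrowth.add_le_apply_VaR_add hF hα₁ hbα.le hε₀ hclose.le,
      (abs_sub_le_iff.mp (hdist (VaR α F + bα * ε))).1]
  have hlower : VaR α F - bα * ε ≤ VaR α G := hG.le_VaR hα₁ fun z hz => by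
    linarith [hgrowth.apply_lt_sub_of_lt_VaR_sub hF hα₀ hbα hε₀ hclose hz,
      (abs_sub_le_iff.mp (hdist z)).2]
  exact abs_sub_le_iff.mpr ⟨by linarith, by linarith⟩

/-- Second VaR bound: under the quantile growth condition,
`|VaR_α(F) − VaR_α(G)| ≤ b_α · sup_y |F(y) − G(y)|` whenever
`sup_y |F(y) − G(y)| < M_α`. -/
theorem VaR_second_bound (α : ℝ) (hα : α ∈ Set.Ioo (0 : ℝ) 1)
    (F : ℝ → ℝ) (hF : IsCDF F)
    (bα Mα : ℝ) (hbα : 0 < bα) (hMα : 0 < Mα)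
    (hgrowth : QuantileGrowth α F bα Mα)
    (G : ℝ → ℝ) (hG : IsCDF G)
    (hclose : (⨆ y : ℝ, |F y - G y|) < Mα) :
    |VaR α F - VaR α G| ≤ bα * ⨆ y : ℝ, |F y - G y| :=
  VaR_second_bound_general α hα F hF bα Mα hbα hgrowth G hG hclose
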